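/- arXiv:0809.1578 — 3 statements merged into one kernel-verified Lean document; each statement's English description precedes it below -/
import Mathlib

section
/- Under the heterogeneous SI model ds/dt(t,ω) = -β(ω) s(t,ω) I(t) with s(0,ω) = S₀ p₀(ω), setting q(t) = -∫₀^t I(τ) dτ and S(t) = ∫_Ω s(t,ω) dω, one has the first integral S(t)/S₀ = M(q(t)), where M(λ) = ∫_Ω e^{λ β(ω)} p₀(ω) dω is the moment generating function of β under p₀ (assuming all integrals converge). -/
/-!
Along each trait `ω` the ODE is linear, `s' = -β(ω) I(t) s`, so
`s(t, ω) = s(0, ω) · exp (-β(ω) ∫₀ᵗ I) = S₀ p₀(ω) e^{q(t) β(ω)}`.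
Integrating over `ω` gives `S(t) = S₀ M(q(t))`.
-/

open Real MeasureTheory intervalIntegral

theorem eq_exp_mul_of_hasDerivAt_neg_mul {x A a : ℝ → ℝ}
    (hA : ∀ u, HasDerivAt A (a u) u) (hx : ∀ u, HasDerivAt x (-a u * x u) u) (t₀ t : ℝ) :
    x t = exp (A t₀ - A t) * x t₀ := by
  have hconst : ∀ u, HasDerivAt (fun v => x v * exp (A v)) 0 u := fun u =>
    ((hx u).mul (hA u).exp).congr_deriv (by ring)
  have hprod : x t * exp (A t) = x t₀ * exp (A t₀) :=
    is_const_of_deriv_eq_zero (fun u => (hconst u).differentiableAt) (fun u => (hconst u).deriv)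
      t t₀
  rw [exp_sub]
  field_simp
  linarith

theorem heterogeneous_SI_first_integral_general {Ω : Type*} [MeasurableSpace Ω] (μ : Measure Ω)
    (β : Ω → ℝ)
    (p₀ : Ω → ℝ)
    (S₀ : ℝ) (hS₀ : 0 < S₀) (I : ℝ → ℝ) (hI : Continuous I)
    (s : ℝ → Ω → ℝ)
    (hode : ∀ t ω, HasDerivAt (fun u => s u ω) (-β ω * s t ω * I t) t)
    (hinit : ∀ ω, s 0 ω = S₀ * p₀ ω)
    (q S M : ℝ → ℝ)
    (hq : ∀ t, q t = -∫ τ in (0:ℝ)..t, I τ)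
    (hS : ∀ t, S t = ∫ ω, s t ω ∂μ)
    (hM : ∀ lam, M lam = ∫ ω, Real.exp (lam * β ω) * p₀ ω ∂μ) :
    ∀ t, 0 ≤ t → S t / S₀ = M (q t) := by
  intro t _
  have hsol : ∀ ω, s t ω = S₀ * (exp (q t * β ω) * p₀ ω) := fun ω => by
    have hA : ∀ u, HasDerivAt (fun v => β ω * ∫ τ in (0:ℝ)..v, I τ) (β ω * I u) u := fun u =>
      ((hI.integral_hasStrictDerivAt 0 u).hasDerivAt).const_mul (β ω)
    have hx : ∀ u, HasDerivAt (fun v => s v ω) (-(β ω * I u) * s u ω) u := fun u =>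
      (hode u ω).congr_deriv (by ring)
    rw [eq_exp_mul_of_hasDerivAt_neg_mul hA hx 0 t, hinit, integral_same, hq t]
    ring_nf
  rw [hS, hM, integral_congr_ae (.of_forall hsol), MeasureTheory.integral_const_mul]
  field_simp

/-- First integral of the heterogeneous SI model: with `q(t) = -∫₀ᵗ I` and
`S(t) = ∫ s(t,ω) dω`, one has `S(t)/S₀ = M(q(t))` where `M` is the mgf of `β` under `p₀`. -/
theorem heterogeneous_SI_first_integral {Ω : Type*} [MeasurableSpace Ω] (μ : Measure Ω)
    [IsProbabilityMeasure μ]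
    (β : Ω → ℝ) (hβmeas : Measurable β) (hβ : ∀ ω, 0 ≤ β ω)
    (p₀ : Ω → ℝ) (hp₀ : ∀ ω, 0 ≤ p₀ ω) (hp₀int : ∫ ω, p₀ ω ∂μ = 1)
    (S₀ : ℝ) (hS₀ : 0 < S₀) (I : ℝ → ℝ) (hI : Continuous I) (hInn : ∀ t, 0 ≤ I t)
    (s : ℝ → Ω → ℝ)
    (hode : ∀ t ω, HasDerivAt (fun u => s u ω) (-β ω * s t ω * I t) t)
    (hinit : ∀ ω, s 0 ω = S₀ * p₀ ω)
    (hint : ∀ t, Integrable (fun ω => s t ω) μ)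
    (hmgf : ∀ lam : ℝ, lam ≤ 0 → Integrable (fun ω => Real.exp (lam * β ω) * p₀ ω) μ)
    (q S M : ℝ → ℝ)
    (hq : ∀ t, q t = -∫ τ in (0:ℝ)..t, I τ)
    (hS : ∀ t, S t = ∫ ω, s t ω ∂μ)
    (hM : ∀ lam, M lam = ∫ ω, Real.exp (lam * β ω) * p₀ ω ∂μ) :
    ∀ t, 0 ≤ t → S t / S₀ = M (q t) :=
  heterogeneous_SI_first_integral_general μ β p₀ S₀ hS₀ I hI s hode hinit q S M hq hS hM
end

section
/- Let p₀ be the gamma density with shape k > 0 and rate ν > 0, let I : [0,T) → ℝ be continuous and nonnegative, and define S(t) = S₀ ∫₀^∞ p₀(ω) e^{-ω ∫₀^t I(τ)dτ} dω. Then S is differentiable and satisfies dS/dt = -(k/ν) S(t) (S(t)/S₀)^{1/k} I(t). That is, the aggregated dynamics of a gamma-distributed susceptible population obey a power-law transmission function with exponent p = 1 + 1/k. -/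
open Real MeasureTheory Set intervalIntegral

/-!
The Laplace transform of the gamma density is `(ν / (ν + x)) ^ k`, so with `J t = ∫₀ᵗ I` the
susceptible population has the closed form `S t = S₀ (ν / (ν + J t)) ^ k`. Differentiating,
`S' = -(k/ν) S q J'` with `q = ν / (ν + J) = (S / S₀) ^ (1 / k)`, which is the power law.
-/

theorem integral_gamma_mul_exp_neg_mul {k ν x : ℝ} (hk : 0 < k) (hν : 0 < ν) (hx : 0 < ν + x)
    {p₀ : ℝ → ℝ}
    (hp₀ : ∀ ω > (0:ℝ), p₀ ω = ν ^ k / Gamma k * ω ^ (k - 1) * exp (-ν * ω)) :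
    ∫ ω in Ioi (0:ℝ), p₀ ω * exp (-ω * x) = (ν / (ν + x)) ^ k := by
  have hΓ : Gamma k ≠ 0 := (Gamma_pos_of_pos hk).ne'
  calc ∫ ω in Ioi (0:ℝ), p₀ ω * exp (-ω * x)
      = ∫ ω in Ioi (0:ℝ), ν ^ k / Gamma k * (ω ^ (k - 1) * exp (-((ν + x) * ω))) := by
        refine setIntegral_congr_fun measurableSet_Ioi fun ω hω => ?_
        rw [hp₀ ω hω, mul_assoc, mul_assoc, ← exp_add]
        ring_nf
    _ = ν ^ k / Gamma k * ((1 / (ν + x)) ^ k * Gamma k) := by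
        rw [MeasureTheory.integral_const_mul, integral_rpow_mul_exp_neg_mul_Ioi hk hx]
    _ = (ν / (ν + x)) ^ k := by
        rw [div_rpow hν.le hx.le, one_div, inv_rpow hx.le]
        field_simp

theorem hasDerivAt_div_add_rpow {J : ℝ → ℝ} {j t k ν : ℝ} (hν : ν ≠ 0) (hJ : HasDerivAt J j t)
    (ht : 0 < ν + J t) :
    HasDerivAt (fun s => (ν / (ν + J s)) ^ k)
      (-(k / ν) * (ν / (ν + J t)) ^ k * (ν / (ν + J t)) * j) t := by
  have hq : HasDerivAt (fun s => ν / (ν + J s)) ((0 * (ν + J t) - ν * j) / (ν + J t) ^ 2) t :=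
    (hasDerivAt_const t ν).div (hJ.const_add ν) ht.ne'
  have hq_ne : ν / (ν + J t) ≠ 0 := div_ne_zero hν ht.ne'
  convert hq.rpow_const (p := k) (Or.inl hq_ne) using 1
  rw [rpow_sub_one hq_ne]
  field_simp
  ring

theorem gamma_heterogeneous_SI_power_law_general (k ν S₀ T : ℝ) (hk : 0 < k) (hν : 0 < ν)
    (hS₀ : 0 < S₀)
    (p₀ : ℝ → ℝ)
    (hp₀ : ∀ ω > (0:ℝ), p₀ ω = ν ^ k / Real.Gamma k * ω ^ (k - 1) * Real.exp (-ν * ω))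
    (I : ℝ → ℝ) (hI : Continuous I) (hInn : ∀ t, 0 ≤ I t)
    (S : ℝ → ℝ)
    (hS : ∀ t, S t = S₀ * ∫ ω in Ioi (0:ℝ), p₀ ω * Real.exp (-ω * ∫ τ in (0:ℝ)..t, I τ)) :
    ∀ t ∈ Ico (0:ℝ) T,
      HasDerivAt S (-(k / ν * S t * (S t / S₀) ^ (1 / k) * I t)) t := by
  intro t ht
  set J : ℝ → ℝ := fun s => ∫ τ in (0:ℝ)..s, I τ
  have hJ : ∀ s, HasDerivAt J (I s) s := fun s => (hI.integral_hasStrictDerivAt 0 s).hasDerivAt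
  have hJt : 0 < ν + J t := add_pos_of_pos_of_nonneg hν (integral_nonneg ht.1 fun τ _ => hInn τ)
  have hS_closed : ∀ s, 0 < ν + J s → S s = S₀ * (ν / (ν + J s)) ^ k := fun s hs => by
    rw [hS s, integral_gamma_mul_exp_neg_mul hk hν hs hp₀]
  have hS_near : S =ᶠ[nhds t] fun s => S₀ * (ν / (ν + J s)) ^ k := by
    filter_upwards [(continuousAt_const.add (hJ t).continuousAt).eventually (lt_mem_nhds hJt)]
      with s hs using hS_closed s hs
  have hS_root : (S t / S₀) ^ (1 / k) = ν / (ν + J t) := by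
    rw [hS_closed t hJt, mul_div_cancel_left₀ _ hS₀.ne', one_div,
      rpow_rpow_inv (div_pos hν hJt).le hk.ne']
  refine (((hasDerivAt_div_add_rpow hν.ne' (hJ t) hJt).const_mul S₀).congr_of_eventuallyEq
    hS_near).congr_deriv ?_
  rw [hS_root, hS_closed t hJt]
  ring

/-- Corollary 1: with gamma-distributed susceptibility, the aggregated susceptible population
obeys the power-law ODE `dS/dt = -(k/ν) S (S/S₀)^(1/k) I(t)`. -/
theorem gamma_heterogeneous_SI_power_law (k ν S₀ T : ℝ) (hk : 0 < k) (hν : 0 < ν)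
    (hS₀ : 0 < S₀) (hT : 0 < T)
    (p₀ : ℝ → ℝ)
    (hp₀ : ∀ ω > (0:ℝ), p₀ ω = ν ^ k / Real.Gamma k * ω ^ (k - 1) * Real.exp (-ν * ω))
    (I : ℝ → ℝ) (hI : Continuous I) (hInn : ∀ t, 0 ≤ I t)
    (S : ℝ → ℝ)
    (hS : ∀ t, S t = S₀ * ∫ ω in Ioi (0:ℝ), p₀ ω * Real.exp (-ω * ∫ τ in (0:ℝ)..t, I τ)) :
    ∀ t ∈ Ico (0:ℝ) T,
      HasDerivAt S (-(k / ν * S t * (S t / S₀) ^ (1 / k) * I t)) t :=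
  gamma_heterogeneous_SI_power_law_general k ν S₀ T hk hν hS₀ p₀ hp₀ I hI hInn S hS
end

section
/- Let M : (-∞, 0] → (0, 1] be C¹ with M(0) = 1, M' > 0, and let S₀ > 0. Suppose (S, I, q) : [0,T) → (0,∞) × (0,∞) × (-∞,0] is a C¹ solution of dS/dt = -φ(q) S I, dI/dt = φ(q) S I, dq/dt = -I, with S(0)=S₀, q(0)=0, where φ(λ) = M'(λ)/M(λ). Then S(t) = S₀ M(q(t)) for all t ∈ [0,T), and consequently dS/dt = -h(S) I where h(S) = S₀ M'(M⁻¹(S/S₀)). -/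
open Real Set

/-!
Along a solution, `S` and `M ∘ q` have the same logarithmic derivative `-φ(q) I`, so
`S / M(q)` is constant, equal to its value `S₀` at `t = 0`. Since `M' > 0`, `M` is injective
on `(-∞, 0]`, so `q(t)` is recovered from `S(t) / S₀ = M(q(t))` and `φ(q) S = S₀ M'(q)`.
-/

theorem strictMonoOn_Iic_of_deriv_pos {f : ℝ → ℝ} {a : ℝ}
    (hf : ∀ x ≤ a, DifferentiableAt ℝ f x) (hf' : ∀ x < a, 0 < deriv f x) :
    StrictMonoOn f (Iic a) :=
  strictMonoOn_of_deriv_pos (convex_Iic a)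
    (fun x hx => (hf x hx).continuousAt.continuousWithinAt)
    (fun x hx => hf' x (by rwa [interior_Iic] at hx))

theorem eq_of_hasDerivAt_zero_Ico {f : ℝ → ℝ} {a b : ℝ}
    (hf : ∀ x ∈ Ico a b, HasDerivAt f 0 x) : ∀ x ∈ Ico a b, f x = f a := by
  rintro x ⟨hax, hxb⟩
  have hsub : Icc a x ⊆ Ico a b := Icc_subset_Ico_right hxb
  exact constant_of_has_deriv_right_zero
    (fun y hy => (hf y (hsub hy)).continuousAt.continuousWithinAt)
    (fun y hy => (hf y (hsub (Ico_subset_Icc_self hy))).hasDerivWithinAt) x ⟨hax, le_rfl⟩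

theorem hasDerivAt_div_eq_zero {f g : ℝ → ℝ} {f' g' t : ℝ}
    (hf : HasDerivAt f f' t) (hg : HasDerivAt g g' t) (hgt : g t ≠ 0)
    (h : f' * g t = f t * g') : HasDerivAt (fun s => f s / g s) 0 t := by
  simpa only [h, sub_self, zero_div] using hf.fun_div hg hgt

theorem SI_reduction_first_integral_general (M : ℝ → ℝ)
    (hM1 : M 0 = 1) (hMsmooth : ∀ lam ≤ (0:ℝ), DifferentiableAt ℝ M lam)
    (hM' : ∀ lam ≤ (0:ℝ), 0 < deriv M lam)
    (hMrange : ∀ lam ≤ (0:ℝ), M lam ∈ Ioc (0:ℝ) 1)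
    (S₀ T : ℝ) (hS₀ : 0 < S₀)
    (φ : ℝ → ℝ) (hφ : ∀ lam, φ lam = deriv M lam / M lam)
    (S I q : ℝ → ℝ)
    (hqle : ∀ t ∈ Ico (0:ℝ) T, q t ≤ 0)
    (hS0 : S 0 = S₀) (hq0 : q 0 = 0)
    (hSode : ∀ t ∈ Ico (0:ℝ) T, HasDerivAt S (-(φ (q t) * S t * I t)) t)
    (hqode : ∀ t ∈ Ico (0:ℝ) T, HasDerivAt q (-I t) t) :
    ∀ t ∈ Ico (0:ℝ) T,
      S t = S₀ * M (q t) ∧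
      HasDerivAt S
        (-(S₀ * deriv M (Function.invFunOn M (Iic (0:ℝ)) (S t / S₀)) * I t)) t := by
  have hMq : ∀ t ∈ Ico (0:ℝ) T, M (q t) ≠ 0 := fun t ht => (hMrange _ (hqle t ht)).1.ne'
  have hconst : ∀ t ∈ Ico (0:ℝ) T, S t / M (q t) = S 0 / M (q 0) := by
    refine eq_of_hasDerivAt_zero_Ico fun t ht => hasDerivAt_div_eq_zero (hSode t ht)
      ((hMsmooth _ (hqle t ht)).hasDerivAt.comp t (hqode t ht)) (hMq t ht) ?_
    rw [hφ]
    field_simp [hMq t ht]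
  intro t ht
  have hfirst : S t = S₀ * M (q t) := by
    have h := hconst t ht
    rw [hS0, hq0, hM1, div_one, div_eq_iff (hMq t ht)] at h
    exact h
  have hinv : Function.invFunOn M (Iic (0:ℝ)) (S t / S₀) = q t := by
    rw [hfirst, mul_div_cancel_left₀ _ hS₀.ne']
    exact (strictMonoOn_Iic_of_deriv_pos hMsmooth fun x hx => hM' x hx.le).injOn
      |>.leftInvOn_invFunOn (hqle t ht)
  refine ⟨hfirst, ?_⟩
  convert hSode t ht using 1
  rw [hinv, hφ, hfirst]
  field_simp [hMq t ht]

/-- Proposition 1: the reduced heterogeneous SI system possesses the first integral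
`S(t) = S₀ M(q(t))`, so `dS/dt = -h(S) I` with `h(S) = S₀ M'(M⁻¹(S/S₀))`. -/
theorem SI_reduction_first_integral (M : ℝ → ℝ)
    (hM1 : M 0 = 1) (hMsmooth : ∀ lam ≤ (0:ℝ), DifferentiableAt ℝ M lam)
    (hM' : ∀ lam ≤ (0:ℝ), 0 < deriv M lam)
    (hMrange : ∀ lam ≤ (0:ℝ), M lam ∈ Ioc (0:ℝ) 1)
    (S₀ T : ℝ) (hS₀ : 0 < S₀)
    (φ : ℝ → ℝ) (hφ : ∀ lam, φ lam = deriv M lam / M lam)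
    (S I q : ℝ → ℝ)
    (hSpos : ∀ t ∈ Ico (0:ℝ) T, 0 < S t) (hIpos : ∀ t ∈ Ico (0:ℝ) T, 0 < I t)
    (hqle : ∀ t ∈ Ico (0:ℝ) T, q t ≤ 0)
    (hS0 : S 0 = S₀) (hq0 : q 0 = 0)
    (hSode : ∀ t ∈ Ico (0:ℝ) T, HasDerivAt S (-(φ (q t) * S t * I t)) t)
    (hIode : ∀ t ∈ Ico (0:ℝ) T, HasDerivAt I (φ (q t) * S t * I t) t)
    (hqode : ∀ t ∈ Ico (0:ℝ) T, HasDerivAt q (-I t) t) :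
    ∀ t ∈ Ico (0:ℝ) T,
      S t = S₀ * M (q t) ∧
      HasDerivAt S
        (-(S₀ * deriv M (Function.invFunOn M (Iic (0:ℝ)) (S t / S₀)) * I t)) t :=
  SI_reduction_first_integral_general M hM1 hMsmooth hM' hMrange S₀ T hS₀ φ hφ S I q hqle hS0 hq0
    hSode hqode
end
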